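/- arXiv:2512.14955 — 2 statements merged into one kernel-verified Lean document; each statement's English description precedes it below -/
import Mathlib

section
/- Let (w, γ) be a solution pair of the local problem (1.2) and let h > 0 satisfy h^{(p-1-2q)/q} = ‖w'‖₂² + h^{p-1}·‖w‖_{p+1}^{p+1}. Then the rescaled pair (h·w, h^{p-1}·γ) is a solution pair of the nonlocal problem (1.1), i.e. h·w is positive on (0,1), vanishes at 0 and 1, and satisfies -(‖(h·w)'‖₂² + ‖h·w‖_{p+1}^{p+1})^q·(h·w)''(x) + (h·w(x))^p = h^{p-1}·γ·(h·w(x)) for all x ∈ (0,1). -/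
open Real Filter Asymptotics Set

/-- `‖u'‖₂² = ∫₀¹ u'(x)² dx`. -/
noncomputable def gradSq (u : ℝ → ℝ) : ℝ := ∫ x in (0:ℝ)..1, (deriv u x) ^ 2

/-- `‖u‖_{p+1}^{p+1} = ∫₀¹ u(x)^{p+1} dx`. -/
noncomputable def pNorm (p : ℝ) (u : ℝ → ℝ) : ℝ := ∫ x in (0:ℝ)..1, (u x) ^ (p + 1)

/-- `‖u‖₂ = (∫₀¹ u(x)² dx)^{1/2}`. -/
noncomputable def l2norm (u : ℝ → ℝ) : ℝ := (∫ x in (0:ℝ)..1, (u x) ^ 2) ^ ((1:ℝ)/2)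

/-- The constant `C₁`. -/
noncomputable def C1 (p : ℝ) : ℝ :=
  (p + 3) * ∫ s in (0:ℝ)..1, Real.sqrt ((p-1)/(p+1) - s ^ 2 + (2/(p+1)) * s ^ (p+1))

/-- Solution pair of the nonlocal problem (1.1). -/
def IsNonlocalSol (p q : ℝ) (u : ℝ → ℝ) (lam : ℝ) : Prop :=
  ContDiffOn ℝ 2 u (Icc 0 1) ∧
  (∀ x ∈ Ioo (0:ℝ) 1, 0 < u x) ∧
  u 0 = 0 ∧ u 1 = 0 ∧
  ∀ x ∈ Ioo (0:ℝ) 1,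
    -((gradSq u + pNorm p u) ^ q) * deriv (deriv u) x + (u x) ^ p = lam * u x

/-- Solution pair of the local problem (1.2). -/
def IsLocalSol (p : ℝ) (w : ℝ → ℝ) (γ : ℝ) : Prop :=
  ContDiffOn ℝ 2 w (Icc 0 1) ∧
  (∀ x ∈ Ioo (0:ℝ) 1, 0 < w x) ∧
  w 0 = 0 ∧ w 1 = 0 ∧
  ∀ x ∈ Ioo (0:ℝ) 1, -deriv (deriv w) x + (w x) ^ p = γ * w x

/-! Both functionals are homogeneous under `u ↦ h u`: `‖(h w)'‖₂² + ‖h w‖_{p+1}^{p+1}` equals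
`h² (‖w'‖₂² + h^{p-1} ‖w‖_{p+1}^{p+1}) = h² · h^{(p-1-2q)/q}`, whose `q`-th power is exactly
`h^{p-1}`. Multiplying the local equation for `w` by `h` therefore gives the nonlocal equation
for `h w` with parameter `h^{p-1} γ`. -/

theorem gradSq_const_mul (c : ℝ) (u : ℝ → ℝ) :
    gradSq (fun x => c * u x) = c ^ 2 * gradSq u := by
  simp only [gradSq, deriv_const_mul_field', mul_pow, intervalIntegral.integral_const_mul]

theorem pNorm_const_mul {c : ℝ} (hc : 0 ≤ c) (p : ℝ) {u : ℝ → ℝ}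
    (hu : ∀ x ∈ Icc (0 : ℝ) 1, 0 ≤ u x) :
    pNorm p (fun x => c * u x) = c ^ (p + 1) * pNorm p u := by
  rw [pNorm, pNorm, ← intervalIntegral.integral_const_mul]
  refine intervalIntegral.integral_congr fun x hx => ?_
  rw [uIcc_of_le zero_le_one] at hx
  exact mul_rpow hc (hu x hx)

namespace IsLocalSol

variable {p : ℝ} {w : ℝ → ℝ} {γ : ℝ}

theorem nonneg (hw : IsLocalSol p w γ) : ∀ x ∈ Icc (0 : ℝ) 1, 0 ≤ w x := by
  obtain ⟨-, hpos, h0, h1, -⟩ := hw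
  rintro x ⟨hx0, hx1⟩
  rcases hx0.eq_or_lt with rfl | hx0
  · exact h0.ge
  rcases hx1.eq_or_lt with rfl | hx1
  · exact h1.ge
  exact (hpos x ⟨hx0, hx1⟩).le

theorem isNonlocalSol_const_mul (hw : IsLocalSol p w γ) {q h : ℝ} (hh : 0 < h)
    (hcoef : (gradSq (fun x => h * w x) + pNorm p (fun x => h * w x)) ^ q = h ^ (p - 1)) :
    IsNonlocalSol p q (fun x => h * w x) (h ^ (p - 1) * γ) := by
  obtain ⟨hC, hpos, h0, h1, heqn⟩ := hw
  refine ⟨contDiffOn_const.mul hC, fun x hx => mul_pos hh (hpos x hx), by simp [h0],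
    by simp [h1], fun x hx => ?_⟩
  have hpow : (h * w x) ^ p = h ^ (p - 1) * h * w x ^ p := by
    rw [mul_rpow hh.le (hpos x hx).le, rpow_sub_one hh.ne', div_mul_cancel₀ _ hh.ne']
  have hloc : w x ^ p = γ * w x + deriv (deriv w) x := by linarith [heqn x hx]
  simp only [hcoef, deriv_const_mul_field', hpow, hloc]
  ring

end IsLocalSol

theorem stmt8_general (p q : ℝ) (hq0 : 0 < q)
    (w : ℝ → ℝ) (γ : ℝ) (hw : IsLocalSol p w γ)
    (h : ℝ) (hh : 0 < h)
    (heq : h ^ ((p - 1 - 2*q)/q) = gradSq w + h ^ (p-1) * pNorm p w) :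
    IsNonlocalSol p q (fun x => h * w x) (h ^ (p-1) * γ) := by
  refine hw.isNonlocalSol_const_mul hh ?_
  have hsplit : h ^ (p + 1) = h ^ 2 * h ^ (p - 1) := by
    rw [← rpow_natCast, ← rpow_add hh]
    ring_nf
  calc (gradSq (fun x => h * w x) + pNorm p (fun x => h * w x)) ^ q
      = (h ^ (2 : ℝ) * h ^ ((p - 1 - 2 * q) / q)) ^ q := by
        rw [gradSq_const_mul, pNorm_const_mul hh.le p hw.nonneg, hsplit, mul_assoc, ← mul_add,
          ← heq, rpow_two]
    _ = h ^ (p - 1) := by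
        rw [← rpow_add hh, ← rpow_mul hh.le]
        congr 1
        field_simp
        ring

theorem stmt8 (p q : ℝ) (hp : 1 < p) (hq0 : 0 < q) (hq1 : q < (p-1)/(p+1))
    (w : ℝ → ℝ) (γ : ℝ) (hγ : 0 < γ) (hw : IsLocalSol p w γ)
    (h : ℝ) (hh : 0 < h)
    (heq : h ^ ((p - 1 - 2*q)/q) = gradSq w + h ^ (p-1) * pNorm p w) :
    IsNonlocalSol p q (fun x => h * w x) (h ^ (p-1) * γ) :=
  stmt8_general p q hq0 w γ hw h hh heq
end

section
/- Let p = 3. Suppose that for each ξ > 0 a function w_ξ and a number γ(ξ) > 0 are given such that (w_ξ, γ(ξ)) is a solution pair of the local problem (1.2) with ‖w_ξ‖₂ = ξ, and for ξ > 0 define h(ξ) > 0 by h(ξ)² = (‖w_ξ‖₄⁴ + √(‖w_ξ‖₄⁸ + 4·‖w_ξ'‖₂²))/2, where ‖w_ξ‖₄⁴ = ∫₀¹ w_ξ(x)⁴ dx. Then, as ξ → ∞, h(ξ)² = ξ⁴ + (2/3)·C₁·ξ³ + o(ξ³), where C₁ = 6·∫₀¹ √(1/2 - s² + s⁴/2)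 ds. -/
open Real Filter Asymptotics Set

/-- `C₁` for `p = 3`. -/
noncomputable def C1three : ℝ := 6 * ∫ s in (0:ℝ)..1, Real.sqrt (1/2 - s^2 + s^4/2)

/-!
Write `u = w_ξ`, `v = u'`, `c = γ(ξ)`. Energy conservation gives `2 v² + r² = (c - u²)²` with
`r = c - M²`, `M = max u`, and Grönwall's lemma rules out `r = 0`. Hence `u² < c`, so
`v' = -u (c - u²) < 0`: `u` rises once to `M` and falls back, and `∫ |v| = 2 M`. Integrating
`c - u² = √(2 v² + r²)` gives `c - ξ² = 2√2 M + O(r)`; testing the equation against `sin (π x)`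
gives `r ≤ π²`, and `ξ² = ∫ u² ≤ M²` gives `M = ξ + O(1)`. Multiplying the equation by `u`, and
integrating the energy law, express `‖u‖₄⁴ = ξ⁴ + (2/3)(c - ξ²) ξ² + O(ξ²)` and
`‖u'‖₂² = O(ξ³)`, so `h² = ‖u‖₄⁴ + O(1/ξ) = ξ⁴ + (4√2/3) ξ³ + O(ξ²)`. Finally `C₁ = 2√2`,
because `1/2 - s² + s⁴/2 = (1 - s²)²/2`.
-/

open MeasureTheory

-- `v` stands for `u'` up to the boundary, where `deriv u` may be junk.
structure IsPhaseCurve (u v : ℝ → ℝ) (c : ℝ) : Prop where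
  continuousOn_u : ContinuousOn u (Icc 0 1)
  continuousOn_v : ContinuousOn v (Icc 0 1)
  hasDerivAt_u : ∀ x ∈ Ioo (0:ℝ) 1, HasDerivAt u (v x) x
  hasDerivAt_v : ∀ x ∈ Ioo (0:ℝ) 1, HasDerivAt v (u x ^ 3 - c * u x) x

structure IsDirichletCurve (u v : ℝ → ℝ) (c : ℝ) : Prop extends IsPhaseCurve u v c where
  pos : ∀ x ∈ Ioo (0:ℝ) 1, 0 < u x
  left : u 0 = 0
  right : u 1 = 0

namespace IsPhaseCurve

variable {u v : ℝ → ℝ} {c : ℝ}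

theorem energy_eq (h : IsPhaseCurve u v c) {x y : ℝ} (hx : x ∈ Icc (0:ℝ) 1)
    (hy : y ∈ Icc (0:ℝ) 1) :
    2 * v x ^ 2 - (c - u x ^ 2) ^ 2 = 2 * v y ^ 2 - (c - u y ^ 2) ^ 2 := by
  wlog hxy : x ≤ y generalizing x y
  · exact (this hy hx (le_of_not_ge hxy)).symm
  have hE : ContinuousOn (fun x => 2 * v x ^ 2 - (c - u x ^ 2) ^ 2) (Icc x y) :=
    ((h.continuousOn_v.pow 2).const_mul 2).sub
      ((continuousOn_const.sub (h.continuousOn_u.pow 2)).pow 2) |>.mono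
      (Icc_subset_Icc hx.1 hy.2)
  have hE' : ∀ z ∈ Ioo x y, HasDerivAt (fun x => 2 * v x ^ 2 - (c - u x ^ 2) ^ 2) 0 z := by
    intro z hz
    have hz' : z ∈ Ioo (0:ℝ) 1 := ⟨hx.1.trans_lt hz.1, hz.2.trans_le hy.2⟩
    have := (((h.hasDerivAt_v z hz').fun_pow 2).const_mul 2).fun_sub
      (((h.hasDerivAt_u z hz').fun_pow 2).const_sub c |>.fun_pow 2)
    exact this.congr_deriv (by ring)
  have := intervalIntegral.integral_eq_sub_of_hasDerivAt_of_le hxy hE hE'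
    intervalIntegrable_const
  simp only [intervalIntegral.integral_zero] at this
  linarith

theorem integral_v (h : IsPhaseCurve u v c) {a b : ℝ} (ha : 0 ≤ a) (hab : a ≤ b) (hb : b ≤ 1) :
    ∫ x in a..b, v x = u b - u a :=
  intervalIntegral.integral_eq_sub_of_hasDerivAt_of_le hab
    (h.continuousOn_u.mono (Icc_subset_Icc ha hb))
    (fun x hx => h.hasDerivAt_u x ⟨ha.trans_lt hx.1, hx.2.trans_le hb⟩)
    ((h.continuousOn_v.mono (Icc_subset_Icc ha hb)).intervalIntegrable_of_Icc hab)

end IsPhaseCurve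

namespace IsDirichletCurve

variable {u v : ℝ → ℝ} {c : ℝ}

theorem nonneg (h : IsDirichletCurve u v c) {x : ℝ} (hx : x ∈ Icc (0:ℝ) 1) : 0 ≤ u x := by
  rcases hx.1.eq_or_lt with rfl | h0
  · exact h.left.ge
  rcases hx.2.eq_or_lt with rfl | h1
  · exact h.right.ge
  exact (h.pos x ⟨h0, h1⟩).le

theorem exists_isMaxOn (h : IsDirichletCurve u v c) :
    ∃ x₀ ∈ Ioo (0:ℝ) 1, IsMaxOn u (Icc 0 1) x₀ := by
  obtain ⟨x₀, hx₀, hmax⟩ :=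
    isCompact_Icc.exists_isMaxOn (nonempty_Icc.2 zero_le_one) h.continuousOn_u
  have hM : 0 < u x₀ := (h.pos (1/2) (by norm_num)).trans_le (hmax (by norm_num))
  refine ⟨x₀, ⟨hx₀.1.lt_of_ne ?_, hx₀.2.lt_of_ne ?_⟩, hmax⟩
  · rintro rfl; exact hM.ne' h.left
  · rintro rfl; exact hM.ne' h.right

theorem v_eq_zero_of_isMaxOn (h : IsDirichletCurve u v c) {x₀ : ℝ} (hx₀ : x₀ ∈ Ioo (0:ℝ) 1)
    (hmax : IsMaxOn u (Icc 0 1) x₀) : v x₀ = 0 :=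
  (hmax.isLocalMax (Icc_mem_nhds hx₀.1 hx₀.2)).hasDerivAt_eq_zero (h.hasDerivAt_u x₀ hx₀)

theorem energy_eq_of_isMaxOn (h : IsDirichletCurve u v c) {x₀ : ℝ} (hx₀ : x₀ ∈ Ioo (0:ℝ) 1)
    (hmax : IsMaxOn u (Icc 0 1) x₀) {x : ℝ} (hx : x ∈ Icc (0:ℝ) 1) :
    2 * v x ^ 2 + (c - u x₀ ^ 2) ^ 2 = (c - u x ^ 2) ^ 2 := by
  have := h.energy_eq hx (Ioo_subset_Icc_self hx₀)
  rw [h.v_eq_zero_of_isMaxOn hx₀ hmax] at this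
  linarith

theorem sub_sq_ne_zero_of_isMaxOn (h : IsDirichletCurve u v c) (hc : 0 < c) {x₀ : ℝ}
    (hx₀ : x₀ ∈ Ioo (0:ℝ) 1) (hmax : IsMaxOn u (Icc 0 1) x₀) : c - u x₀ ^ 2 ≠ 0 := by
  intro hr
  have hq : ∀ x ∈ Icc x₀ 1, c - u x ^ 2 = 0 := by
    refine eq_zero_of_abs_deriv_le_mul_abs_self_of_eq_zero_right (K := √2 * u x₀)
      (f' := fun x => -(2 * u x * v x)) ?_ (fun x hx => ?_) hr (fun x hx => ?_)
    · exact (continuousOn_const.sub (h.continuousOn_u.pow 2)).mono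
        (Icc_subset_Icc hx₀.1.le le_rfl)
    · have hx' : x ∈ Ioo (0:ℝ) 1 := ⟨hx₀.1.trans_le hx.1, hx.2⟩
      simpa using (((h.hasDerivAt_u x hx').pow 2).const_sub c).hasDerivWithinAt
    · have hx' : x ∈ Icc (0:ℝ) 1 := ⟨hx₀.1.le.trans hx.1, hx.2.le⟩
      -- with `r = 0` the energy law reads `2 v² = (c - u²)²`
      have hv : √2 * |v x| = |c - u x ^ 2| := by
        have := h.energy_eq_of_isMaxOn hx₀ hmax hx'
        rw [hr] at this
        rw [← sqrt_sq_eq_abs, ← sqrt_sq_eq_abs, ← sqrt_mul zero_le_two]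
        congr 1; linarith
      have hu : |u x| ≤ u x₀ := by rw [abs_of_nonneg (h.nonneg hx')]; exact hmax hx'
      calc ‖-(2 * u x * v x)‖ = 2 * |u x| * |v x| := by
            rw [Real.norm_eq_abs, abs_neg, abs_mul, abs_mul, abs_two]
        _ ≤ 2 * u x₀ * |v x| := by gcongr
        _ = u x₀ * (√2 * √2) * |v x| := by rw [mul_self_sqrt zero_le_two]; ring
        _ = √2 * u x₀ * ‖c - u x ^ 2‖ := by rw [Real.norm_eq_abs, ← hv]; ring
  have h1 := hq 1 ⟨hx₀.2.le, le_rfl⟩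
  rw [h.right] at h1
  exact hc.ne' (by simpa using h1)

theorem sq_lt (h : IsDirichletCurve u v c) (hc : 0 < c) {x : ℝ} (hx : x ∈ Icc (0:ℝ) 1) :
    u x ^ 2 < c := by
  obtain ⟨x₀, hx₀, hmax⟩ := h.exists_isMaxOn
  have hr := h.sub_sq_ne_zero_of_isMaxOn hc hx₀ hmax
  by_contra! hle
  have hu := h.continuousOn_u.mono (Icc_subset_Icc le_rfl hx.2)
  obtain ⟨z, hz, hz0⟩ : ∃ z ∈ Icc 0 x, c - u z ^ 2 = 0 :=
    intermediate_value_Icc' (f := fun y => c - u y ^ 2) hx.1 (by fun_prop)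
      ⟨by linarith, by simp only [h.left]; linarith⟩
  have := h.energy_eq_of_isMaxOn hx₀ hmax ⟨hz.1, hz.2.trans hx.2⟩
  rw [hz0] at this
  exact hr (pow_eq_zero_iff two_ne_zero |>.1 (by nlinarith [sq_nonneg (v z)]))

theorem strictAntiOn_v (h : IsDirichletCurve u v c) (hc : 0 < c) : StrictAntiOn v (Icc 0 1) :=
  strictAntiOn_of_deriv_neg (convex_Icc 0 1) h.continuousOn_v fun x hx => by
    rw [interior_Icc] at hx
    rw [(h.hasDerivAt_v x hx).deriv]
    nlinarith [h.pos x hx, h.sq_lt hc (Ioo_subset_Icc_self hx)]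

theorem integral_abs_v (h : IsDirichletCurve u v c) (hc : 0 < c) {x₀ : ℝ}
    (hx₀ : x₀ ∈ Ioo (0:ℝ) 1) (hmax : IsMaxOn u (Icc 0 1) x₀) :
    ∫ x in (0:ℝ)..1, |v x| = 2 * u x₀ := by
  have hv₀ := h.v_eq_zero_of_isMaxOn hx₀ hmax
  have hanti := (h.strictAntiOn_v hc).antitoneOn
  have hx₀' : x₀ ∈ Icc (0:ℝ) 1 := Ioo_subset_Icc_self hx₀
  have hleft : ∫ x in (0:ℝ)..x₀, |v x| = u x₀ := by
    rw [intervalIntegral.integral_congr (g := v) fun x hx => ?_,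
      h.integral_v le_rfl hx₀.1.le hx₀.2.le, h.left, sub_zero]
    rw [uIcc_of_le hx₀.1.le] at hx
    exact abs_of_nonneg (hv₀ ▸ hanti ⟨hx.1, hx.2.trans hx₀'.2⟩ hx₀' hx.2)
  have hright : ∫ x in x₀..1, |v x| = u x₀ := by
    rw [intervalIntegral.integral_congr (g := fun x => -v x) fun x hx => ?_,
      intervalIntegral.integral_neg, h.integral_v hx₀.1.le hx₀.2.le le_rfl, h.right, zero_sub,
      neg_neg]
    rw [uIcc_of_le hx₀.2.le] at hx
    exact abs_of_nonpos (hv₀ ▸ hanti hx₀' ⟨hx₀'.1.trans hx.1, hx.2⟩ hx.1)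
  have hint : ∀ a b : ℝ, 0 ≤ a → a ≤ b → b ≤ 1 → IntervalIntegrable (fun x => |v x|) volume a b :=
    fun a b ha hab hb =>
      (h.continuousOn_v.mono (Icc_subset_Icc ha hb)).abs.intervalIntegrable_of_Icc hab
  rw [← intervalIntegral.integral_add_adjacent_intervals
    (hint 0 x₀ le_rfl hx₀.1.le hx₀.2.le) (hint x₀ 1 hx₀.1.le hx₀.2.le le_rfl), hleft, hright]
  ring

theorem sub_sq_le_pi_sq (h : IsDirichletCurve u v c) {x₀ : ℝ} (hmax : IsMaxOn u (Icc 0 1) x₀) :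
    c - u x₀ ^ 2 ≤ π ^ 2 := by
  have hu := h.continuousOn_u
  have hv := h.continuousOn_v
  have hsin : ∀ x ∈ Icc (0:ℝ) 1, 0 ≤ sin (π * x) := fun x hx =>
    sin_nonneg_of_nonneg_of_le_pi (by nlinarith [pi_pos, hx.1]) (by nlinarith [pi_pos, hx.2])
  have hJ : 0 < ∫ x in (0:ℝ)..1, u x * sin (π * x) :=
    intervalIntegral.intervalIntegral_pos_of_pos_on
      ((by fun_prop : ContinuousOn _ _).intervalIntegrable_of_Icc zero_le_one)
      (fun x hx => mul_pos (h.pos x hx)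
        (sin_pos_of_pos_of_lt_pi (by nlinarith [pi_pos, hx.1]) (by nlinarith [pi_pos, hx.2])))
      zero_lt_one
  -- `sin (π x)` is the principal Dirichlet eigenfunction, so this is Green's identity
  have hgreen : ∫ x in (0:ℝ)..1, (u x ^ 3 - c * u x + π ^ 2 * u x) * sin (π * x) = 0 := by
    have hderiv : ∀ x ∈ Ioo (0:ℝ) 1, HasDerivAt (fun x => v x * sin (π * x) - π * u x * cos (π * x))
        ((u x ^ 3 - c * u x + π ^ 2 * u x) * sin (π * x)) x := fun x hx => by
      have hsin : HasDerivAt (fun y => sin (π * y)) (cos (π * x) * π) x := by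
        simpa using ((hasDerivAt_id x).const_mul π).sin
      have hcos : HasDerivAt (fun y => cos (π * y)) (-sin (π * x) * π) x := by
        simpa using ((hasDerivAt_id x).const_mul π).cos
      exact (((h.hasDerivAt_v x hx).fun_mul hsin).fun_sub
        (((h.hasDerivAt_u x hx).const_mul π).fun_mul hcos)).congr_deriv (by ring)
    have := intervalIntegral.integral_eq_sub_of_hasDerivAt_of_le zero_le_one (by fun_prop) hderiv
      ((by fun_prop : ContinuousOn _ _).intervalIntegrable_of_Icc zero_le_one)
    simpa [h.left, h.right] using this
  have hle : ∫ x in (0:ℝ)..1, (u x ^ 3 - c * u x + π ^ 2 * u x) * sin (π * x)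
      ≤ ∫ x in (0:ℝ)..1, (π ^ 2 - (c - u x₀ ^ 2)) * (u x * sin (π * x)) := by
    refine intervalIntegral.integral_mono_on zero_le_one
      ((by fun_prop : ContinuousOn _ _).intervalIntegrable_of_Icc zero_le_one)
      ((by fun_prop : ContinuousOn _ _).intervalIntegrable_of_Icc zero_le_one) fun x hx => ?_
    have : u x ^ 2 ≤ u x₀ ^ 2 := pow_le_pow_left₀ (h.nonneg hx) (hmax hx) 2
    nlinarith [mul_nonneg (h.nonneg hx) (hsin x hx)]
  rw [hgreen, intervalIntegral.integral_const_mul] at hle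
  exact sub_nonneg.1 (nonneg_of_mul_nonneg_left hle hJ)

theorem integral_sq_v_add_integral_pow_four (h : IsDirichletCurve u v c) :
    (∫ x in (0:ℝ)..1, v x ^ 2) + ∫ x in (0:ℝ)..1, u x ^ 4 = c * ∫ x in (0:ℝ)..1, u x ^ 2 := by
  have hu := h.continuousOn_u
  have hv := h.continuousOn_v
  have hI : ∀ f : ℝ → ℝ, ContinuousOn f (Icc 0 1) → IntervalIntegrable f volume 0 1 :=
    fun f hf => hf.intervalIntegrable_of_Icc zero_le_one
  have := intervalIntegral.integral_eq_sub_of_hasDerivAt_of_le zero_le_one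
    (f := fun x => u x * v x) (f' := fun x => v x ^ 2 + u x ^ 4 - c * u x ^ 2) (by fun_prop)
    (fun x hx => ((h.hasDerivAt_u x hx).fun_mul (h.hasDerivAt_v x hx)).congr_deriv (by ring))
    (hI _ (by fun_prop))
  rw [intervalIntegral.integral_sub (hI _ (by fun_prop)) (hI _ (by fun_prop)),
    intervalIntegral.integral_add (hI _ (by fun_prop)) (hI _ (by fun_prop)),
    intervalIntegral.integral_const_mul, h.left, h.right] at this
  linarith

theorem two_mul_integral_sq_v (h : IsDirichletCurve u v c) {x₀ : ℝ} (hx₀ : x₀ ∈ Ioo (0:ℝ) 1)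
    (hmax : IsMaxOn u (Icc 0 1) x₀) :
    2 * ∫ x in (0:ℝ)..1, v x ^ 2 = c ^ 2 - (c - u x₀ ^ 2) ^ 2
      - 2 * c * (∫ x in (0:ℝ)..1, u x ^ 2) + ∫ x in (0:ℝ)..1, u x ^ 4 := by
  have hu := h.continuousOn_u
  have hI : ∀ f : ℝ → ℝ, ContinuousOn f (Icc 0 1) → IntervalIntegrable f volume 0 1 :=
    fun f hf => hf.intervalIntegrable_of_Icc zero_le_one
  rw [← intervalIntegral.integral_const_mul, intervalIntegral.integral_congr
    (g := fun x => c ^ 2 - (c - u x₀ ^ 2) ^ 2 - 2 * c * u x ^ 2 + u x ^ 4) fun x hx => ?_]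
  · rw [intervalIntegral.integral_add (hI _ (by fun_prop)) (hI _ (by fun_prop)),
      intervalIntegral.integral_sub intervalIntegrable_const (hI _ (by fun_prop)),
      intervalIntegral.integral_const_mul, intervalIntegral.integral_const]
    simp
  · rw [uIcc_of_le zero_le_one] at hx
    have := h.energy_eq_of_isMaxOn hx₀ hmax hx
    simp only
    linarith

theorem integral_sq_le_of_isMaxOn (h : IsDirichletCurve u v c) {x₀ : ℝ}
    (hmax : IsMaxOn u (Icc 0 1) x₀) : ∫ x in (0:ℝ)..1, u x ^ 2 ≤ u x₀ ^ 2 := by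
  have hu := h.continuousOn_u
  simpa using intervalIntegral.integral_mono_on zero_le_one
    ((by fun_prop : ContinuousOn (fun x => u x ^ 2) _).intervalIntegrable_of_Icc zero_le_one)
    (intervalIntegrable_const (μ := volume)) fun x hx => pow_le_pow_left₀ (h.nonneg hx) (hmax hx) 2

theorem abs_sub_integral_sq_sub_le (h : IsDirichletCurve u v c) (hc : 0 < c) {x₀ : ℝ}
    (hx₀ : x₀ ∈ Ioo (0:ℝ) 1) (hmax : IsMaxOn u (Icc 0 1) x₀) :
    |c - (∫ x in (0:ℝ)..1, u x ^ 2) - 2 * √2 * u x₀| ≤ c - u x₀ ^ 2 := by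
  have hu := h.continuousOn_u
  have hv := h.continuousOn_v
  have hI : ∀ f : ℝ → ℝ, ContinuousOn f (Icc 0 1) → IntervalIntegrable f volume 0 1 :=
    fun f hf => hf.intervalIntegrable_of_Icc zero_le_one
  set r := c - u x₀ ^ 2
  have hr : 0 < r := sub_pos.2 (h.sq_lt hc (Ioo_subset_Icc_self hx₀))
  have hs : √2 * √2 = 2 := mul_self_sqrt zero_le_two
  -- `c - u² = √(2 v² + r²)`
  have hbounds : ∀ x ∈ Icc (0:ℝ) 1, √2 * |v x| ≤ c - u x ^ 2 ∧ c - u x ^ 2 ≤ √2 * |v x| + r := by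
    intro x hx
    have hq := sub_pos.2 (h.sq_lt hc hx)
    have he := h.energy_eq_of_isMaxOn hx₀ hmax hx
    have hv2 : |v x| ^ 2 = v x ^ 2 := sq_abs _
    have h2 : 0 ≤ √2 * |v x| := by positivity
    constructor <;> nlinarith
  have hlo := intervalIntegral.integral_mono_on zero_le_one (hI _ (by fun_prop))
    (hI _ (by fun_prop)) fun x hx => (hbounds x hx).1
  have hhi := intervalIntegral.integral_mono_on zero_le_one (hI _ (by fun_prop))
    (hI (fun x => √2 * |v x| + r) (by fun_prop)) fun x hx => (hbounds x hx).2
  rw [intervalIntegral.integral_add (hI _ (by fun_prop)) intervalIntegrable_const] at hhi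
  rw [intervalIntegral.integral_sub intervalIntegrable_const (hI _ (by fun_prop))] at hlo hhi
  simp only [intervalIntegral.integral_const_mul, intervalIntegral.integral_const,
    h.integral_abs_v hc hx₀ hmax, sub_zero, smul_eq_mul, one_mul] at hlo hhi
  rw [abs_le]
  constructor <;> linarith

end IsDirichletCurve

theorem sqrt_sq_add_four_mul_le {A B : ℝ} (hA : 0 < A) (hB : 0 ≤ B) :
    A ≤ √(A ^ 2 + 4 * B) ∧ √(A ^ 2 + 4 * B) ≤ A + 2 * B / A := by
  constructor
  · exact Real.le_sqrt_of_sq_le (by linarith)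
  · rw [Real.sqrt_le_iff]
    refine ⟨by positivity, ?_⟩
    have : (A + 2 * B / A) ^ 2 = A ^ 2 + 4 * B + (2 * B / A) ^ 2 := by field_simp; ring
    nlinarith [sq_nonneg (2 * B / A)]

theorem abs_root_sub_le_of_bounds {ξ c M A B : ℝ} (hξ : 10 ≤ ξ) (hM : 0 ≤ M)
    (hξM : ξ ^ 2 ≤ M ^ 2)
    (hr : c - M ^ 2 ≤ 10) (hg : |c - ξ ^ 2 - 2 * √2 * M| ≤ c - M ^ 2)
    (hAB : B + A = c * ξ ^ 2) (hB : 2 * B = c ^ 2 - (c - M ^ 2) ^ 2 - 2 * c * ξ ^ 2 + A)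
    (hB0 : 0 ≤ B) :
    |(A + √(A ^ 2 + 4 * B)) / 2 - ξ ^ 4 - 4 * √2 / 3 * ξ ^ 3| ≤ 30 * ξ ^ 2 := by
  set r := c - M ^ 2 with hr_def
  set g := c - ξ ^ 2 with hg_def
  obtain ⟨hg₁, hg₂⟩ := abs_le.1 hg
  have hs : √2 * √2 = 2 := mul_self_sqrt zero_le_two
  have hs₁ : 1.4 ≤ √2 := Real.le_sqrt_of_sq_le (by norm_num)
  have hs₂ : √2 ≤ 1.5 := by nlinarith [sqrt_nonneg 2]
  have hξM' : ξ ≤ M := by nlinarith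
  have hMξ : M ≤ ξ + 3 := by nlinarith
  have he : |g - 2 * √2 * ξ| ≤ 19 := by
    rw [abs_le]; constructor <;> nlinarith
  obtain ⟨he₁, he₂⟩ := abs_le.1 he
  have hξ2 : 10 * ξ ≤ ξ ^ 2 := by nlinarith
  have hg0 : 0 ≤ g := by nlinarith
  have hg5 : g ≤ 5 * ξ := by nlinarith
  have hr0 : 0 ≤ r := (abs_nonneg _).trans hg
  have hA : A = ξ ^ 4 + 2 / 3 * g * ξ ^ 2 - g ^ 2 / 3 + r ^ 2 / 3 := by
    linear_combination (-1/3) * hB + (2/3) * hAB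
  have hξ4 : ξ ^ 4 ≤ A := by
    have : 0 ≤ g * (2 * ξ ^ 2 - g) := mul_nonneg hg0 (by linarith)
    nlinarith
  have hB3 : B ≤ 3 * ξ ^ 3 := by
    have hcg : c * g ≤ (ξ ^ 2 + 5 * ξ) * (5 * ξ) :=
      mul_le_mul (by linarith) hg5 hg0 (by positivity)
    nlinarith
  have hApos : 0 < A := lt_of_lt_of_le (by positivity) hξ4
  obtain ⟨hT₁, hT₂⟩ := sqrt_sq_add_four_mul_le hApos hB0
  have hBA : 2 * B / A ≤ 1 := by
    rw [div_le_one hApos]; nlinarith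
  have hmain : |A - ξ ^ 4 - 4 * √2 / 3 * ξ ^ 3| ≤ 29 * ξ ^ 2 := by
    have hexp : A - ξ ^ 4 - 4 * √2 / 3 * ξ ^ 3
        = 2 / 3 * (ξ ^ 2 * (g - 2 * √2 * ξ)) - g ^ 2 / 3 + r ^ 2 / 3 := by rw [hA]; ring
    have k₁ : ξ ^ 2 * (g - 2 * √2 * ξ) ≤ ξ ^ 2 * 19 := by gcongr
    have k₂ : ξ ^ 2 * (-19) ≤ ξ ^ 2 * (g - 2 * √2 * ξ) := by gcongr
    have k₃ : g ^ 2 ≤ (5 * ξ) ^ 2 := pow_le_pow_left₀ hg0 hg5 2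
    have k₄ : r ^ 2 ≤ 10 ^ 2 := pow_le_pow_left₀ hr0 hr 2
    rw [hexp, abs_le]; constructor <;> linarith [sq_nonneg r, sq_nonneg g]
  rw [abs_le] at hmain ⊢
  constructor <;> linarith

theorem IsDirichletCurve.abs_root_sub_le {u v : ℝ → ℝ} {c : ℝ} (h : IsDirichletCurve u v c)
    (hc : 0 < c) {ξ : ℝ} (hξ : 10 ≤ ξ) (hnorm : ∫ x in (0:ℝ)..1, u x ^ 2 = ξ ^ 2) :
    |((∫ x in (0:ℝ)..1, u x ^ 4) +
        √((∫ x in (0:ℝ)..1, u x ^ 4) ^ 2 + 4 * ∫ x in (0:ℝ)..1, v x ^ 2)) / 2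
      - ξ ^ 4 - 4 * √2 / 3 * ξ ^ 3| ≤ 30 * ξ ^ 2 := by
  obtain ⟨x₀, hx₀, hmax⟩ := h.exists_isMaxOn
  have hAB := h.integral_sq_v_add_integral_pow_four
  have hB := h.two_mul_integral_sq_v hx₀ hmax
  have hg := h.abs_sub_integral_sq_sub_le hc hx₀ hmax
  have hξM := h.integral_sq_le_of_isMaxOn hmax
  have hr : c - u x₀ ^ 2 ≤ 10 := (h.sub_sq_le_pi_sq hmax).trans (by nlinarith [pi_pos, pi_lt_d2])
  rw [hnorm] at hAB hB hg hξM
  exact abs_root_sub_le_of_bounds hξ (h.pos x₀ hx₀).le hξM hr hg hAB hB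
    (intervalIntegral.integral_nonneg zero_le_one fun x _ => sq_nonneg _)

theorem pNorm_three (u : ℝ → ℝ) : pNorm 3 u = ∫ x in (0:ℝ)..1, u x ^ 4 := by
  refine intervalIntegral.integral_congr fun x _ => ?_
  rw [show (3:ℝ) + 1 = (4:ℕ) by norm_num, rpow_natCast]

theorem integral_sq_eq_of_l2norm_eq {u : ℝ → ℝ} {ξ : ℝ} (h : l2norm u = ξ) :
    ∫ x in (0:ℝ)..1, u x ^ 2 = ξ ^ 2 := by
  rw [← h, l2norm, ← sqrt_eq_rpow, sq_sqrt]
  exact intervalIntegral.integral_nonneg zero_le_one fun x _ => sq_nonneg _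

theorem derivWithin_Icc_eventuallyEq_deriv {u : ℝ → ℝ} {x : ℝ} (hx : x ∈ Ioo (0:ℝ) 1) :
    derivWithin u (Icc 0 1) =ᶠ[nhds x] deriv u :=
  Filter.eventually_of_mem (Ioo_mem_nhds hx.1 hx.2) fun _ hy =>
    derivWithin_of_mem_nhds (Icc_mem_nhds hy.1 hy.2)

theorem IsLocalSol.isDirichletCurve {u : ℝ → ℝ} {γ : ℝ} (hs : IsLocalSol 3 u γ) :
    IsDirichletCurve u (derivWithin u (Icc 0 1)) γ := by
  obtain ⟨hreg, hpos, h0, h1, hode⟩ := hs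
  have hv : ContDiffOn ℝ 1 (derivWithin u (Icc 0 1)) (Icc 0 1) :=
    hreg.derivWithin (uniqueDiffOn_Icc one_pos) (by norm_num)
  refine ⟨⟨hreg.continuousOn, hv.continuousOn, fun x hx => ?_, fun x hx => ?_⟩, hpos, h0, h1⟩
  · rw [(derivWithin_Icc_eventuallyEq_deriv hx).eq_of_nhds]
    exact ((hreg.contDiffAt (Icc_mem_nhds hx.1 hx.2)).differentiableAt (by norm_num)).hasDerivAt
  · have hd := ((hv.differentiableOn one_ne_zero) x (Ioo_subset_Icc_self hx)).differentiableAt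
      (Icc_mem_nhds hx.1 hx.2)
    refine hd.hasDerivAt.congr_deriv ?_
    rw [(derivWithin_Icc_eventuallyEq_deriv hx).deriv_eq]
    have := hode x hx
    rw [show (3:ℝ) = (3:ℕ) by norm_num, rpow_natCast] at this
    linarith

theorem gradSq_eq_integral_derivWithin (u : ℝ → ℝ) :
    gradSq u = ∫ x in (0:ℝ)..1, derivWithin u (Icc 0 1) x ^ 2 := by
  rw [gradSq, intervalIntegral.integral_of_le zero_le_one,
    intervalIntegral.integral_of_le zero_le_one, integral_Ioc_eq_integral_Ioo,
    integral_Ioc_eq_integral_Ioo]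
  exact setIntegral_congr_fun measurableSet_Ioo fun x hx => by
    rw [(derivWithin_Icc_eventuallyEq_deriv hx).eq_of_nhds]

theorem C1three_eq : C1three = 2 * √2 := by
  have hpt : ∀ s ∈ uIcc (0:ℝ) 1, √(1/2 - s^2 + s^4/2) = √2 / 2 * (1 - s^2) := by
    intro s hs
    rw [uIcc_of_le zero_le_one] at hs
    have hs2 : 0 ≤ 1 - s^2 := by nlinarith [hs.1, hs.2]
    rw [show (1:ℝ)/2 - s^2 + s^4/2 = (√2 / 2 * (1 - s^2))^2 by
      rw [mul_pow, div_pow, sq_sqrt zero_le_two]; ring]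
    exact sqrt_sq (by positivity)
  rw [C1three, intervalIntegral.integral_congr hpt, intervalIntegral.integral_const_mul,
    intervalIntegral.integral_sub intervalIntegrable_const
      ((continuous_pow 2).intervalIntegrable 0 1), integral_pow,
    intervalIntegral.integral_const]
  norm_num
  ring

theorem stmt16 (w : ℝ → ℝ → ℝ) (γ : ℝ → ℝ)
    (hsol : ∀ ξ > (0:ℝ), 0 < γ ξ ∧ IsLocalSol 3 (w ξ) (γ ξ) ∧ l2norm (w ξ) = ξ)
    (h : ℝ → ℝ)
    (hh : ∀ ξ > (0:ℝ), 0 < h ξ ∧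
      (h ξ)^2 = (pNorm 3 (w ξ) + Real.sqrt ((pNorm 3 (w ξ))^2 + 4 * gradSq (w ξ))) / 2) :
    (fun ξ => (h ξ)^2 - ξ^4 - (2/3) * C1three * ξ^3)
      =o[atTop] (fun ξ : ℝ => ξ^3) := by
  have hbound : ∀ ξ ≥ (10:ℝ), |h ξ ^ 2 - ξ ^ 4 - 2 / 3 * C1three * ξ ^ 3| ≤ 30 * ξ ^ 2 := by
    intro ξ hξ
    obtain ⟨hγ, hs, hnorm⟩ := hsol ξ (by linarith)
    rw [(hh ξ (by linarith)).2, C1three_eq, pNorm_three, gradSq_eq_integral_derivWithin]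
    convert hs.isDirichletCurve.abs_root_sub_le hγ hξ (integral_sq_eq_of_l2norm_eq hnorm)
      using 3
    ring
  refine IsBigO.trans_isLittleO (g := fun ξ : ℝ => ξ ^ 2) (isBigO_iff.2 ⟨30, ?_⟩)
    (isLittleO_pow_pow_atTop_of_lt (by norm_num))
  filter_upwards [eventually_ge_atTop 10] with ξ hξ
  simpa [abs_of_nonneg (sq_nonneg ξ)] using hbound ξ hξ
end
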